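/- Let d = 2 or d = 3, λ > 0, and σ > 2/d. Let V : ℝ^d → ℝ be continuous with 0 ≤ V(x) ≤ C₀(1+|x|²)^{k/2} for all x ∈ ℝ^d, for some constants C₀, k > 0. Then for every Schwartz function u : ℝ^d → ℂ with u not identically zero, E(u_s) → −∞ as s → +∞, where u_s(x) := s^{d/2} u(sx). In particular the energy E is unbounded from below on the set of functions with fixed mass and fixed angular momentum. -/

import Mathlib

open MeasureTheory Real Complex Filter

noncomputable section

/-- The energy functional
`E(u) = ∫ (1/2)|∇u|² + V|u|² − (λ/(σ+1))|u|^{2σ+2}`. -/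
def energy {d : ℕ} (V : EuclideanSpace ℝ (Fin d) → ℝ) (lam σ : ℝ)
    (u : EuclideanSpace ℝ (Fin d) → ℂ) : ℝ :=
  ∫ x, (1 / 2 : ℝ) * ‖fderiv ℝ u x‖ ^ 2 + V x * ‖u x‖ ^ 2
    - (lam / (σ + 1)) * ‖u x‖ ^ (2 * σ + 2)

/-- The scaling `u_s(x) = s^{d/2} u(s x)`. -/
def scl {d : ℕ} (s : ℝ) (u : EuclideanSpace ℝ (Fin d) → ℂ) :
    EuclideanSpace ℝ (Fin d) → ℂ :=
  fun x => ((s ^ ((d : ℝ) / 2) : ℝ) : ℂ) * u (s • x)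

/-!
Under `u ↦ u_s` the kinetic term scales like `s²` and the nonlinear term like `s^{dσ}`, while for
`s ≥ 1` the potential term stays below `C₀ ∫ (1 + |x|²)^{k/2} |u|²`: after the substitution
`y = s x` it is `∫ V(y/s) |u(y)|²`, and `V(y/s) ≤ C₀ (1 + |y|²)^{k/2}` because the weight increases
with `|x|`. As `dσ > 2` and `∫ |u|^{2σ+2} > 0`, the negative term dominates.
-/

namespace SchwartzMap

variable {E F : Type*} [NormedAddCommGroup E] [InnerProductSpace ℝ E] [FiniteDimensional ℝ E]
  [MeasurableSpace E] [BorelSpace E] [NormedAddCommGroup F] [NormedSpace ℝ F]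
  {μ : Measure E} [μ.HasTemperateGrowth]

theorem integrable_norm_rpow (f : SchwartzMap E F) {p : ℝ} (hp : 0 < p) :
    Integrable (fun x => ‖f x‖ ^ p) μ := by
  simpa [hp.le] using
    (f.memLp (ENNReal.ofReal p) μ).integrable_norm_rpow (by simpa using hp) ENNReal.ofReal_ne_top

theorem integrable_norm_sq (f : SchwartzMap E F) :
    Integrable (fun x => ‖f x‖ ^ 2) μ :=
  (f.memLp 2 μ).integrable_norm_pow two_ne_zero

theorem integrable_norm_fderiv_sq (f : SchwartzMap E F) :
    Integrable (fun x => ‖fderiv ℝ f x‖ ^ 2) μ :=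
  (fderivCLM ℝ E F f).integrable_norm_sq

theorem integrable_one_add_norm_sq_rpow_mul_norm_sq (f : SchwartzMap E F)
    (r : ℝ) : Integrable (fun x => (1 + ‖x‖ ^ 2) ^ r * ‖f x‖ ^ 2) μ := by
  have hg := Function.hasTemperateGrowth_one_add_norm_sq_rpow E (r / 2)
  refine (smulLeftCLM F (fun x : E => (1 + ‖x‖ ^ 2) ^ (r / 2)) f).integrable_norm_sq.congr
    (.of_forall fun x => ?_)
  dsimp only
  rw [smulLeftCLM_apply_apply hg, norm_smul, mul_pow, Real.norm_of_nonneg (by positivity),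
    ← Real.rpow_natCast, ← Real.rpow_mul (by positivity)]
  norm_num

theorem integral_norm_rpow_pos [μ.IsOpenPosMeasure] {f : SchwartzMap E F}
    (hf : f ≠ 0) {p : ℝ} (hp : 0 < p) : 0 < ∫ x, ‖f x‖ ^ p ∂μ := by
  obtain ⟨x, hx⟩ := DFunLike.ne_iff.mp hf
  exact integral_pos_of_integrable_nonneg_nonzero (x := x)
    (f.continuous.norm.rpow_const fun _ => .inr hp.le)
    (f.integrable_norm_rpow hp) (fun y => by positivity)
    (Real.rpow_pos_of_pos (norm_pos_iff.mpr hx) p).ne'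

end SchwartzMap

namespace ScaledEnergy

variable {d : ℕ}

theorem norm_scl_apply {s : ℝ} (hs : 0 ≤ s) (u : EuclideanSpace ℝ (Fin d) → ℂ)
    (x : EuclideanSpace ℝ (Fin d)) :
    ‖scl s u x‖ = s ^ ((d : ℝ) / 2) * ‖u (s • x)‖ := by
  rw [scl, norm_mul, Complex.norm_real, Real.norm_of_nonneg (by positivity)]

theorem continuous_scl (s : ℝ) {u : EuclideanSpace ℝ (Fin d) → ℂ} (hu : Continuous u) :
    Continuous (scl s u) :=
  continuous_const.mul (hu.comp (continuous_const_smul s))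

theorem norm_fderiv_scl_apply {s : ℝ} (hs : 0 ≤ s) (u : EuclideanSpace ℝ (Fin d) → ℂ)
    (x : EuclideanSpace ℝ (Fin d)) :
    ‖fderiv ℝ (scl s u) x‖ = s ^ ((d : ℝ) / 2) * (s * ‖fderiv ℝ u (s • x)‖) := by
  have : scl s u = ((s ^ ((d : ℝ) / 2) : ℝ) : ℂ) • fun y => u (s • y) := rfl
  rw [this, fderiv_const_smul_field, Pi.smul_apply, fderiv_comp_smul, norm_smul, norm_smul,
    Complex.norm_real, Real.norm_of_nonneg (by positivity), Real.norm_of_nonneg hs]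

theorem integrable_pow_mul_comp_smul {f : EuclideanSpace ℝ (Fin d) → ℝ} (hf : Integrable f)
    {s : ℝ} (hs : 0 < s) : Integrable fun x => s ^ d * f (s • x) :=
  (hf.comp_smul hs.ne').const_mul _

theorem integral_pow_mul_comp_smul (f : EuclideanSpace ℝ (Fin d) → ℝ) {s : ℝ} (hs : 0 < s) :
    ∫ x, s ^ d * f (s • x) = ∫ x, f x := by
  rw [integral_const_mul, Measure.integral_comp_smul_of_nonneg _ _ _ (hR := hs.le),
    finrank_euclideanSpace_fin, smul_eq_mul, mul_inv_cancel_left₀ (by positivity)]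

theorem rpow_natCast_div_two_sq {s : ℝ} (hs : 0 ≤ s) (n : ℕ) :
    (s ^ ((n : ℝ) / 2)) ^ 2 = s ^ n := by
  rw [← Real.rpow_natCast, ← Real.rpow_mul hs]
  norm_num

theorem norm_scl_sq {s : ℝ} (hs : 0 ≤ s) (u : EuclideanSpace ℝ (Fin d) → ℂ)
    (x : EuclideanSpace ℝ (Fin d)) : ‖scl s u x‖ ^ 2 = s ^ d * ‖u (s • x)‖ ^ 2 := by
  rw [norm_scl_apply hs, mul_pow, rpow_natCast_div_two_sq hs]

theorem norm_fderiv_scl_sq {s : ℝ} (hs : 0 ≤ s) (u : EuclideanSpace ℝ (Fin d) → ℂ) :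
    (fun x => ‖fderiv ℝ (scl s u) x‖ ^ 2) =
      fun x => s ^ 2 * (s ^ d * ‖fderiv ℝ u (s • x)‖ ^ 2) := by
  ext x
  rw [norm_fderiv_scl_apply hs, mul_pow, mul_pow, rpow_natCast_div_two_sq hs]
  ring

theorem norm_scl_rpow {s : ℝ} (hs : 0 < s) (u : EuclideanSpace ℝ (Fin d) → ℂ) (p : ℝ) :
    (fun x => ‖scl s u x‖ ^ p) =
      fun x => s ^ (d * (p / 2 - 1)) * (s ^ d * ‖u (s • x)‖ ^ p) := by
  ext x
  rw [norm_scl_apply hs.le, Real.mul_rpow (by positivity) (norm_nonneg _), ← Real.rpow_mul hs.le,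
    ← mul_assoc, ← Real.rpow_natCast, ← Real.rpow_add hs]
  ring_nf

theorem energy_eq {V : EuclideanSpace ℝ (Fin d) → ℝ} {lam σ : ℝ}
    {u : EuclideanSpace ℝ (Fin d) → ℂ} (hgrad : Integrable fun x => ‖fderiv ℝ u x‖ ^ 2)
    (hpot : Integrable fun x => V x * ‖u x‖ ^ 2)
    (hnl : Integrable fun x => ‖u x‖ ^ (2 * σ + 2)) :
    energy V lam σ u = 1 / 2 * (∫ x, ‖fderiv ℝ u x‖ ^ 2) + (∫ x, V x * ‖u x‖ ^ 2)
      - lam / (σ + 1) * ∫ x, ‖u x‖ ^ (2 * σ + 2) := by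
  rw [energy, integral_sub _ (hnl.const_mul _), integral_add (hgrad.const_mul _) hpot,
    integral_const_mul, integral_const_mul]
  exact (hgrad.const_mul _).add hpot

section Potential

variable {V : EuclideanSpace ℝ (Fin d) → ℝ} {C₀ k : ℝ}

theorem potential_mul_norm_scl_sq_le (hV : ∀ x, 0 ≤ V x ∧ V x ≤ C₀ * (1 + ‖x‖ ^ 2) ^ (k / 2))
    (hC₀ : 0 ≤ C₀) (hk : 0 ≤ k) {s : ℝ} (hs : 1 ≤ s) (u : EuclideanSpace ℝ (Fin d) → ℂ)
    (x : EuclideanSpace ℝ (Fin d)) :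
    V x * ‖scl s u x‖ ^ 2 ≤
      s ^ d * (C₀ * ((1 + ‖s • x‖ ^ 2) ^ (k / 2) * ‖u (s • x)‖ ^ 2)) := by
  have hnorm : ‖x‖ ≤ ‖s • x‖ := by
    rw [norm_smul, Real.norm_of_nonneg (by linarith)]
    exact le_mul_of_one_le_left (norm_nonneg x) hs
  have hVs : V x ≤ C₀ * (1 + ‖s • x‖ ^ 2) ^ (k / 2) := by
    refine (hV x).2.trans (mul_le_mul_of_nonneg_left ?_ hC₀)
    gcongr
  rw [norm_scl_sq (by linarith)]
  calc V x * (s ^ d * ‖u (s • x)‖ ^ 2)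
      ≤ C₀ * (1 + ‖s • x‖ ^ 2) ^ (k / 2) * (s ^ d * ‖u (s • x)‖ ^ 2) := by gcongr
    _ = _ := by ring

theorem integrable_potential_mul_norm_scl_sq (hVm : AEStronglyMeasurable V)
    (hV : ∀ x, 0 ≤ V x ∧ V x ≤ C₀ * (1 + ‖x‖ ^ 2) ^ (k / 2)) (hC₀ : 0 ≤ C₀) (hk : 0 ≤ k)
    {s : ℝ} (hs : 1 ≤ s) (u : SchwartzMap (EuclideanSpace ℝ (Fin d)) ℂ) :
    Integrable fun x => V x * ‖scl s u x‖ ^ 2 := by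
  refine (integrable_pow_mul_comp_smul
    ((u.integrable_one_add_norm_sq_rpow_mul_norm_sq (k / 2)).const_mul C₀) (by linarith)).mono'
    (hVm.mul ((continuous_scl s u.continuous).norm.pow 2).aestronglyMeasurable)
    (.of_forall fun x => ?_)
  rw [Real.norm_of_nonneg (mul_nonneg (hV x).1 (sq_nonneg _))]
  exact potential_mul_norm_scl_sq_le hV hC₀ hk hs u x

theorem integral_potential_mul_norm_scl_sq_le (hVm : AEStronglyMeasurable V)
    (hV : ∀ x, 0 ≤ V x ∧ V x ≤ C₀ * (1 + ‖x‖ ^ 2) ^ (k / 2)) (hC₀ : 0 ≤ C₀) (hk : 0 ≤ k)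
    {s : ℝ} (hs : 1 ≤ s) (u : SchwartzMap (EuclideanSpace ℝ (Fin d)) ℂ) :
    ∫ x, V x * ‖scl s u x‖ ^ 2 ≤ C₀ * ∫ x, (1 + ‖x‖ ^ 2) ^ (k / 2) * ‖u x‖ ^ 2 := by
  have hs0 : 0 < s := by linarith
  calc ∫ x, V x * ‖scl s u x‖ ^ 2
      ≤ ∫ x, s ^ d * (C₀ * ((1 + ‖s • x‖ ^ 2) ^ (k / 2) * ‖u (s • x)‖ ^ 2)) :=
        integral_mono (integrable_potential_mul_norm_scl_sq hVm hV hC₀ hk hs u)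
          (integrable_pow_mul_comp_smul
            ((u.integrable_one_add_norm_sq_rpow_mul_norm_sq (k / 2)).const_mul C₀) hs0)
          (potential_mul_norm_scl_sq_le hV hC₀ hk hs u)
    _ = C₀ * ∫ x, (1 + ‖x‖ ^ 2) ^ (k / 2) * ‖u x‖ ^ 2 := by
        rw [integral_pow_mul_comp_smul (fun y => C₀ * ((1 + ‖y‖ ^ 2) ^ (k / 2) * ‖u y‖ ^ 2)) hs0,
          integral_const_mul]

theorem energy_scl_le {lam σ : ℝ} (hσ : -1 < σ) (hVm : AEStronglyMeasurable V)
    (hV : ∀ x, 0 ≤ V x ∧ V x ≤ C₀ * (1 + ‖x‖ ^ 2) ^ (k / 2)) (hC₀ : 0 ≤ C₀) (hk : 0 ≤ k)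
    {s : ℝ} (hs : 1 ≤ s) (u : SchwartzMap (EuclideanSpace ℝ (Fin d)) ℂ) :
    energy V lam σ (scl s u) ≤
      1 / 2 * (∫ x, ‖fderiv ℝ u x‖ ^ 2) * s ^ 2
        + C₀ * (∫ x, (1 + ‖x‖ ^ 2) ^ (k / 2) * ‖u x‖ ^ 2)
        - lam / (σ + 1) * (∫ x, ‖u x‖ ^ (2 * σ + 2)) * s ^ ((d : ℝ) * σ) := by
  have hs0 : 0 < s := by linarith
  have hgrad : Integrable fun x => ‖fderiv ℝ (scl s u) x‖ ^ 2 := by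
    rw [norm_fderiv_scl_sq hs0.le]
    exact (integrable_pow_mul_comp_smul u.integrable_norm_fderiv_sq hs0).const_mul _
  have hnl : Integrable fun x => ‖scl s u x‖ ^ (2 * σ + 2) := by
    rw [norm_scl_rpow hs0]
    exact (integrable_pow_mul_comp_smul (u.integrable_norm_rpow (by linarith)) hs0).const_mul _
  have hexp : (d : ℝ) * ((2 * σ + 2) / 2 - 1) = d * σ := by ring
  rw [energy_eq hgrad (integrable_potential_mul_norm_scl_sq hVm hV hC₀ hk hs u) hnl,
    norm_fderiv_scl_sq hs0.le, norm_scl_rpow hs0, integral_const_mul,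
    integral_pow_mul_comp_smul (fun y => ‖fderiv ℝ u y‖ ^ 2) hs0, integral_const_mul,
    integral_pow_mul_comp_smul (fun y => ‖u y‖ ^ (2 * σ + 2)) hs0, hexp]
  linarith [integral_potential_mul_norm_scl_sq_le hVm hV hC₀ hk hs u]

end Potential

theorem tendsto_mul_sq_add_sub_mul_rpow_atBot (a b : ℝ) {c p : ℝ} (hc : 0 < c) (hp : 2 < p) :
    Tendsto (fun s : ℝ => a * s ^ 2 + b - c * s ^ p) atTop atBot := by
  have hsmall : Tendsto (fun s : ℝ => a * s ^ (2 - p) - c) atTop (nhds (-c)) := by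
    simpa [neg_sub] using ((tendsto_rpow_neg_atTop (sub_pos.2 hp)).const_mul a).sub_const c
  have hlarge : Tendsto (fun s : ℝ => s ^ p * (a * s ^ (2 - p) - c)) atTop atBot :=
    (tendsto_rpow_atTop (by linarith)).atTop_mul_neg (neg_lt_zero.2 hc) hsmall
  refine (tendsto_atBot_add_const_right atTop b hlarge).congr' ?_
  filter_upwards [eventually_gt_atTop 0] with s hs
  have hsp : s ^ p * s ^ (2 - p) = s ^ 2 := by
    rw [← Real.rpow_add hs]
    norm_num
  linear_combination a * hsp

end ScaledEnergy

open ScaledEnergy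

theorem energy_unbounded_below (d : ℕ) (hd : d = 2 ∨ d = 3) (lam σ : ℝ)
    (hlam : 0 < lam) (hσ : 2 / (d : ℝ) < σ)
    (V : EuclideanSpace ℝ (Fin d) → ℝ) (hVc : Continuous V)
    (C₀ k : ℝ) (hC₀ : 0 < C₀) (hk : 0 < k)
    (hV : ∀ x : EuclideanSpace ℝ (Fin d),
      0 ≤ V x ∧ V x ≤ C₀ * (1 + ‖x‖ ^ 2) ^ (k / 2))
    (u : SchwartzMap (EuclideanSpace ℝ (Fin d)) ℂ) (hu : u ≠ 0) :
    Tendsto (fun s : ℝ => energy V lam σ (scl s (⇑u))) atTop atBot := by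
  have hd0 : (0 : ℝ) < d := by rcases hd with rfl | rfl <;> norm_num
  have hσ0 : 0 < σ := (div_pos two_pos hd0).trans hσ
  have hsupercritical : 2 < (d : ℝ) * σ := by rwa [div_lt_iff₀ hd0, mul_comm] at hσ
  have hc : 0 < lam / (σ + 1) * ∫ x, ‖u x‖ ^ (2 * σ + 2) :=
    mul_pos (div_pos hlam (by linarith)) (u.integral_norm_rpow_pos hu (by linarith))
  refine tendsto_atBot_mono' atTop ?_
    (tendsto_mul_sq_add_sub_mul_rpow_atBot (1 / 2 * ∫ x, ‖fderiv ℝ u x‖ ^ 2)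
      (C₀ * ∫ x, (1 + ‖x‖ ^ 2) ^ (k / 2) * ‖u x‖ ^ 2) hc hsupercritical)
  filter_upwards [eventually_ge_atTop 1] with s hs
  exact energy_scl_le (by linarith) hVc.aestronglyMeasurable hV hC₀.le hk.le hs u

end
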